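/- Let w_i = [u_i; v_i] and w_j = [u_j; v_j] be right eigenvectors of H = [[A,−R],[−Q,−Aᵀ]] with right eigenvalues λ_i, λ_j. Then ω̃ := u_iᵀ v_j − v_iᵀ u_j satisfies δ_f(ω̃) + (λ_i + λ_j)·ω̃ = 0; hence if λ_i and −λ_j are not δ_f-conjugate, then u_iᵀ v_j = v_iᵀ u_j. -/

import Mathlib

open Matrix

/-!
Turn `δ` into a derivation `D`. The eigen-equation reads `D ∘ w = (H - λ) w`, and the symplectic
matrix `J` has constant entries, so `D (xᵀ J y) = ((H - λ) x)ᵀ J y + xᵀ J (H - μ) y` for eigenvectors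
`x, y`. Since `H` is skew-adjoint for `J` (`HᵀJ + JH = 0`), the `H`-terms cancel and
`D (xᵀ J y) = -(λ + μ) (xᵀ J y)`. If `ω̃ ≠ 0`, then `c = ω̃` exhibits `λᵢ` and `-λⱼ` as
`δ`-conjugate.
-/

section

variable {R ι : Type*} [CommRing R] [Fintype ι]

theorem Matrix.IsSkewAdjoint.mulVec_dotProduct_add_dotProduct_mulVec {S H : Matrix ι ι R}
    (hH : S.IsSkewAdjoint H) (x y : ι → R) :
    (H *ᵥ x) ⬝ᵥ S *ᵥ y + x ⬝ᵥ S *ᵥ (H *ᵥ y) = 0 := by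
  unfold Matrix.IsSkewAdjoint Matrix.IsAdjointPair at hH
  rw [← vecMul_transpose, ← dotProduct_mulVec, mulVec_mulVec, mulVec_mulVec, hH, ← dotProduct_add,
    ← add_mulVec, Matrix.mul_neg, neg_add_cancel, zero_mulVec, dotProduct_zero]

theorem isSkewAdjoint_J_fromBlocks [DecidableEq ι] {A P Q : Matrix ι ι R} (hP : P.IsSymm)
    (hQ : Q.IsSymm) : (J ι R).IsSkewAdjoint (fromBlocks A (-P) (-Q) (-Aᵀ)) := by
  simp [Matrix.IsSkewAdjoint, Matrix.IsAdjointPair, J, fromBlocks_transpose, fromBlocks_multiply,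
    fromBlocks_neg, hP.eq, hQ.eq]

theorem sumElim_dotProduct_J_mulVec_sumElim [DecidableEq ι] (u v u' v' : ι → R) :
    Sum.elim u v ⬝ᵥ J ι R *ᵥ Sum.elim u' v' = v ⬝ᵥ u' - u ⬝ᵥ v' := by
  simp [J, fromBlocks_mulVec, sumElim_dotProduct_sumElim, neg_mulVec]
  ring

end

namespace Derivation

variable {R A ι m : Type*} [CommSemiring R] [CommRing A] [Algebra R A]

def ofLeibniz (δ : A → A) (hadd : ∀ a b, δ (a + b) = δ a + δ b)
    (hmul : ∀ a b, δ (a * b) = δ a * b + a * δ b) : Derivation ℤ A A :=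
  Derivation.mk' (AddMonoidHom.mk' δ hadd).toIntLinearMap fun a b => by
    simp [hmul, mul_comm, add_comm]

variable (D : Derivation R A A)

theorem map_dotProduct [Fintype ι] (x y : ι → A) :
    D (x ⬝ᵥ y) = (D ∘ x) ⬝ᵥ y + x ⬝ᵥ (D ∘ y) := by
  simp only [dotProduct, map_sum, leibniz, smul_eq_mul, Function.comp_apply,
    ← Finset.sum_add_distrib]
  exact Finset.sum_congr rfl fun _ _ => by ring

theorem comp_mulVec [Fintype ι] {M : Matrix m ι A} (hM : ∀ i j, D (M i j) = 0) (y : ι → A) :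
    D ∘ (M *ᵥ y) = M *ᵥ (D ∘ y) := by
  funext i
  have hrow : D ∘ M i = 0 := funext (hM i)
  simp [mulVec, map_dotProduct, hrow]

theorem map_J_apply [DecidableEq ι] (i j : ι ⊕ ι) : D (J ι A i j) = 0 := by
  rcases i with i | i <;> rcases j with j | j <;> simp [J, one_apply, apply_ite D]

theorem map_dotProduct_mulVec_add_mul_eq_zero [Fintype ι] {S H : Matrix ι ι A}
    (hH : S.IsSkewAdjoint H) (hS : ∀ i j, D (S i j) = 0) {x y : ι → A} {a b : A}
    (hx : H *ᵥ x - D ∘ x = a • x) (hy : H *ᵥ y - D ∘ y = b • y) :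
    D (x ⬝ᵥ S *ᵥ y) + (a + b) * (x ⬝ᵥ S *ᵥ y) = 0 := by
  rw [sub_eq_iff_eq_add', ← sub_eq_iff_eq_add] at hx hy
  rw [D.map_dotProduct, D.comp_mulVec hS, ← hx, ← hy]
  simp only [sub_dotProduct, mulVec_sub, dotProduct_sub, mulVec_smul, smul_dotProduct,
    dotProduct_smul, smul_eq_mul]
  linear_combination hH.mulVec_dotProduct_add_dotProduct_mulVec x y

end Derivation

theorem neg_eq_add_div_of_add_mul_eq_zero {K : Type*} [Field K] {δ : K → K} {a b c : K}
    (h : δ c + (a + b) * c = 0) (hc : c ≠ 0) : -b = a + δ c / c := by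
  field_simp
  linear_combination -h

theorem stmt_16_general {K : Type*} [Field K] {n : ℕ} (δ : K → K)
    (hadd : ∀ a b : K, δ (a + b) = δ a + δ b)
    (hmul : ∀ a b : K, δ (a * b) = δ a * b + a * δ b)
    (A R Q : Matrix (Fin n) (Fin n) K) (hR : R.IsSymm) (hQ : Q.IsSymm)
    (H : Matrix (Fin n ⊕ Fin n) (Fin n ⊕ Fin n) K)
    (hH : H = Matrix.fromBlocks A (-R) (-Q) (-Aᵀ))
    (ui vi uj vj : Fin n → K) (lami lamj : K)
    (heigi : H.mulVec (Sum.elim ui vi) - (fun k => δ (Sum.elim ui vi k))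
      = lami • Sum.elim ui vi)
    (heigj : H.mulVec (Sum.elim uj vj) - (fun k => δ (Sum.elim uj vj k))
      = lamj • Sum.elim uj vj) :
    δ (ui ⬝ᵥ vj - vi ⬝ᵥ uj) + (lami + lamj) * (ui ⬝ᵥ vj - vi ⬝ᵥ uj) = 0 ∧
      ((¬ ∃ c : K, c ≠ 0 ∧ -lamj = lami + δ c / c) → ui ⬝ᵥ vj = vi ⬝ᵥ uj) := by
  let D := Derivation.ofLeibniz δ hadd hmul
  -- Mathlib's `J` is `[[0, -1], [1, 0]]`, the negative of the paper's, hence the order `w_j, w_i`.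
  have hω : ui ⬝ᵥ vj - vi ⬝ᵥ uj = Sum.elim uj vj ⬝ᵥ J (Fin n) K *ᵥ Sum.elim ui vi := by
    rw [sumElim_dotProduct_J_mulVec_sumElim, dotProduct_comm vj, dotProduct_comm uj]
  have hdiff : δ (ui ⬝ᵥ vj - vi ⬝ᵥ uj) + (lami + lamj) * (ui ⬝ᵥ vj - vi ⬝ᵥ uj) = 0 := by
    rw [hω, add_comm lami]
    subst hH
    exact D.map_dotProduct_mulVec_add_mul_eq_zero (isSkewAdjoint_J_fromBlocks hR hQ) D.map_J_apply
      heigj heigi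
  refine ⟨hdiff, fun hconj => by_contra fun hne => hconj ?_⟩
  exact ⟨_, sub_ne_zero.2 hne, neg_eq_add_div_of_add_mul_eq_zero hdiff (sub_ne_zero.2 hne)⟩

/-- for right eigenvectors `wᵢ = [uᵢ; vᵢ]`, `w_j = [u_j; v_j]` of
`H` with eigenvalues `λᵢ, λ_j`, the scalar `ω̃ = uᵢᵀ v_j − vᵢᵀ u_j` satisfies
`δ_f(ω̃) + (λᵢ + λ_j) ω̃ = 0`; hence if `λᵢ` and `−λ_j` are not
`δ_f`-conjugate, `uᵢᵀ v_j = vᵢᵀ u_j`. -/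
theorem stmt_16 {K : Type*} [Field K] {n : ℕ} (δ : K → K)
    (hadd : ∀ a b : K, δ (a + b) = δ a + δ b)
    (hmul : ∀ a b : K, δ (a * b) = δ a * b + a * δ b)
    (A R Q : Matrix (Fin n) (Fin n) K) (hR : R.IsSymm) (hQ : Q.IsSymm)
    (H : Matrix (Fin n ⊕ Fin n) (Fin n ⊕ Fin n) K)
    (hH : H = Matrix.fromBlocks A (-R) (-Q) (-Aᵀ))
    (ui vi uj vj : Fin n → K) (lami lamj : K)
    (hwi : Sum.elim ui vi ≠ 0) (hwj : Sum.elim uj vj ≠ 0)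
    (heigi : H.mulVec (Sum.elim ui vi) - (fun k => δ (Sum.elim ui vi k))
      = lami • Sum.elim ui vi)
    (heigj : H.mulVec (Sum.elim uj vj) - (fun k => δ (Sum.elim uj vj k))
      = lamj • Sum.elim uj vj) :
    δ (ui ⬝ᵥ vj - vi ⬝ᵥ uj) + (lami + lamj) * (ui ⬝ᵥ vj - vi ⬝ᵥ uj) = 0 ∧
      ((¬ ∃ c : K, c ≠ 0 ∧ -lamj = lami + δ c / c) → ui ⬝ᵥ vj = vi ⬝ᵥ uj) :=
  stmt_16_general δ hadd hmul A R Q hR hQ H hH ui vi uj vj lami lamj heigi heigj
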